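/- arXiv:1801.00691 — 6 statements merged into one kernel-verified Lean document; each statement's English description precedes it below -/
import Mathlib

section
/- Let Ω ⊆ ℝ² be open, g ∈ ℝ, and let u : ℝ × Ω → ℝ², D, q : ℝ × Ω → ℝ be twice continuously differentiable and f : Ω → ℝ be continuously differentiable. Suppose that on ℝ × Ω both the momentum equation ∂ₜu + (qD) u⊥ + ∇(½|u|² + g D) = 0 and the vorticity evolution equation ∂ₜ(qD) + ∇·(qD u) = 0 hold pointwise. Then ∂ₜ(qD − ∇⊥·u − f) = 0 on ℝ × Ω; in particular, if the diagnostic relation qD = ∇⊥·u + f holds at time t = 0, then it holds at all times. -/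
/-!
Write `Q = qD` and `K = ½|u|² + gD`. The momentum equation says `∂ₜu = Q u⊥ − ∇K`; taking
`∇⊥·` and using the symmetry of second derivatives (for `u` and for `K`) gives
`∂ₜ(∇⊥·u) = −∇·(Q u)`, which is `∂ₜQ` by the vorticity equation. Since `f` does not depend on
time, `qD − ∇⊥·u − f` has zero time derivative, hence is constant in time.
-/

/-- The absolute vorticity `∇⊥·u + f = ∂₁u₂ − ∂₂u₁ + f` of the velocity field
`u = (u1, u2)` with Coriolis parameter `f`, at time `t` and point `(x, y)`. -/
noncomputable def absVort (u1 u2 : ℝ → ℝ → ℝ → ℝ) (f : ℝ → ℝ → ℝ) (t x y : ℝ) : ℝ :=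
  deriv (fun a => u2 t a y) x - deriv (fun b => u1 t x b) y + f x y

open Filter Topology

section SecondDerivative

variable {E : Type*} [NormedAddCommGroup E] [NormedSpace ℝ E] {G : E → ℝ}

theorem hasDerivAt_fderiv_apply_comp {c : ℝ → E} {v : E} {s₀ : ℝ}
    (hG : ContDiffAt ℝ 2 G (c s₀)) (hc : HasDerivAt c v s₀) (w : E) :
    HasDerivAt (fun s => fderiv ℝ G (c s) w) (fderiv ℝ (fderiv ℝ G) (c s₀) v w) s₀ := by
  have hG' : DifferentiableAt ℝ (fderiv ℝ G) (c s₀) :=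
    (hG.fderiv_right (m := 1) le_rfl).differentiableAt one_ne_zero
  simpa using (hG'.hasFDerivAt.comp_hasDerivAt s₀ hc).clm_apply (hasDerivAt_const s₀ w)

/-- Schwarz's theorem for a two-parameter family of curves with constant velocities, such as
the coordinate slices `(s, r) ↦ (s, r, y)` of `ℝ³`. -/
theorem hasDerivAt_deriv_comp_comm {c : ℝ → ℝ → E} {v w : E} {s₀ r₀ : ℝ}
    (hG : ContDiffAt ℝ 2 G (c s₀ r₀))
    (hv : ∀ s r, HasDerivAt (fun s => c s r) v s) (hw : ∀ s r, HasDerivAt (c s) w r) :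
    HasDerivAt (fun s => deriv (fun r => G (c s r)) r₀)
      (deriv (fun r => deriv (fun s => G (c s r)) s₀) r₀) s₀ := by
  have hdiff : ∀ᶠ p in 𝓝 (c s₀ r₀), DifferentiableAt ℝ G p :=
    (hG.eventually (by simp)).mono fun p hp => hp.differentiableAt two_ne_zero
  have hs : (fun s => deriv (fun r => G (c s r)) r₀) =ᶠ[𝓝 s₀]
      fun s => fderiv ℝ G (c s r₀) w := by
    filter_upwards [(hv s₀ r₀).continuousAt.tendsto.eventually hdiff] with s hs
    exact (hs.hasFDerivAt.comp_hasDerivAt r₀ (hw s r₀)).deriv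
  have hr : (fun r => deriv (fun s => G (c s r)) s₀) =ᶠ[𝓝 r₀]
      fun r => fderiv ℝ G (c s₀ r) v := by
    filter_upwards [(hw s₀ r₀).continuousAt.tendsto.eventually hdiff] with r hr
    exact (hr.hasFDerivAt.comp_hasDerivAt s₀ (hv s₀ r)).deriv
  rw [hr.deriv_eq, (hasDerivAt_fderiv_apply_comp hG (hw s₀ r₀) v).deriv,
    (hG.isSymmSndFDerivAt (by simp)) w v]
  exact (hasDerivAt_fderiv_apply_comp (c := fun s => c s r₀) hG (hv s₀ r₀) w)
    |>.congr_of_eventuallyEq hs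

end SecondDerivative

theorem hasDerivAt_fst_slice (t x y : ℝ) :
    HasDerivAt (fun s : ℝ => ((s, x, y) : ℝ × ℝ × ℝ)) (1, 0, 0) t :=
  (hasDerivAt_id t).prodMk (hasDerivAt_const t (x, y))

theorem hasDerivAt_snd_slice (t x y : ℝ) :
    HasDerivAt (fun a : ℝ => ((t, a, y) : ℝ × ℝ × ℝ)) (0, 1, 0) x :=
  (hasDerivAt_const x t).prodMk ((hasDerivAt_id x).prodMk (hasDerivAt_const x y))

theorem hasDerivAt_thd_slice (t x y : ℝ) :
    HasDerivAt (fun b : ℝ => ((t, x, b) : ℝ × ℝ × ℝ)) (0, 0, 1) y :=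
  (hasDerivAt_const y t).prodMk ((hasDerivAt_const y x).prodMk (hasDerivAt_id y))

/-- `∂ₜ(∇⊥·u) = −∇·(Q u)` at `(t, x, y)` for a velocity `u` obeying the momentum equation
`∂ₜu + Q u⊥ + ∇K = 0` near that point. -/
theorem hasDerivAt_curl_of_momentum {u1 u2 Q K : ℝ → ℝ → ℝ → ℝ} {t x y : ℝ}
    (hu1 : ContDiffAt ℝ 2 (fun p : ℝ × ℝ × ℝ => u1 p.1 p.2.1 p.2.2) (t, x, y))
    (hu2 : ContDiffAt ℝ 2 (fun p : ℝ × ℝ × ℝ => u2 p.1 p.2.1 p.2.2) (t, x, y))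
    (hQ : DifferentiableAt ℝ (fun p : ℝ × ℝ × ℝ => Q p.1 p.2.1 p.2.2) (t, x, y))
    (hK : ContDiffAt ℝ 2 (fun p : ℝ × ℝ × ℝ => K p.1 p.2.1 p.2.2) (t, x, y))
    (hmom1 : ∀ᶠ b in 𝓝 y,
      deriv (fun s => u1 s x b) t + Q t x b * -u2 t x b + deriv (fun a => K t a b) x = 0)
    (hmom2 : ∀ᶠ a in 𝓝 x,
      deriv (fun s => u2 s a y) t + Q t a y * u1 t a y + deriv (fun b => K t a b) y = 0) :
    HasDerivAt (fun s => deriv (fun a => u2 s a y) x - deriv (fun b => u1 s x b) y)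
      (-(deriv (fun a => Q t a y * u1 t a y) x + deriv (fun b => Q t x b * u2 t x b) y)) t := by
  have hcurl2 : HasDerivAt (fun s => deriv (fun a => u2 s a y) x)
      (deriv (fun a => deriv (fun s => u2 s a y) t) x) t :=
    hasDerivAt_deriv_comp_comm (c := fun s a => (s, a, y)) hu2
      (fun s a => hasDerivAt_fst_slice s a y) (fun s a => hasDerivAt_snd_slice s a y)
  have hcurl1 : HasDerivAt (fun s => deriv (fun b => u1 s x b) y)
      (deriv (fun b => deriv (fun s => u1 s x b) t) y) t :=
    hasDerivAt_deriv_comp_comm (c := fun s b => (s, x, b)) hu1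
      (fun s b => hasDerivAt_fst_slice s x b) (fun s b => hasDerivAt_thd_slice s x b)
  have hKxy : HasDerivAt (fun a => deriv (fun b => K t a b) y)
      (deriv (fun b => deriv (fun a => K t a b) x) y) x :=
    hasDerivAt_deriv_comp_comm (c := fun a b => (t, a, b)) hK
      (fun a b => hasDerivAt_snd_slice t a b) (fun a b => hasDerivAt_thd_slice t a b)
  have hKyx : HasDerivAt (fun b => deriv (fun a => K t a b) x)
      (deriv (fun a => deriv (fun b => K t a b) y) x) y :=
    hasDerivAt_deriv_comp_comm (c := fun b a => (t, a, b)) hK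
      (fun b a => hasDerivAt_thd_slice t a b) (fun b a => hasDerivAt_snd_slice t a b)
  have hQu1 : DifferentiableAt ℝ (fun a => Q t a y * u1 t a y) x := by
    exact (hQ.mul (hu1.differentiableAt two_ne_zero)).comp x
      (hasDerivAt_snd_slice t x y).differentiableAt
  have hQu2 : DifferentiableAt ℝ (fun b => Q t x b * u2 t x b) y := by
    exact (hQ.mul (hu2.differentiableAt two_ne_zero)).comp y
      (hasDerivAt_thd_slice t x y).differentiableAt
  have hdu2 : HasDerivAt (fun a => deriv (fun s => u2 s a y) t)
      (-deriv (fun a => Q t a y * u1 t a y) x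
        - deriv (fun b => deriv (fun a => K t a b) x) y) x := by
    refine (hQu1.hasDerivAt.fun_neg.fun_sub hKxy).congr_of_eventuallyEq ?_
    filter_upwards [hmom2] with a ha
    linarith
  have hdu1 : HasDerivAt (fun b => deriv (fun s => u1 s x b) t)
      (deriv (fun b => Q t x b * u2 t x b) y
        - deriv (fun a => deriv (fun b => K t a b) y) x) y := by
    refine (hQu2.hasDerivAt.fun_sub hKyx).congr_of_eventuallyEq ?_
    filter_upwards [hmom1] with b hb
    linarith
  rw [hdu2.deriv] at hcurl2
  rw [hdu1.deriv] at hcurl1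
  refine (hcurl2.fun_sub hcurl1).congr_deriv ?_
  -- the two mixed second derivatives of `K` cancel
  linarith [hKxy.deriv]

theorem diagnostic_relation_preserved_general
    (Ω : Set (ℝ × ℝ)) (hΩ : IsOpen Ω) (g : ℝ)
    (u1 u2 D q : ℝ → ℝ → ℝ → ℝ) (f : ℝ → ℝ → ℝ)
    (hu1 : ContDiffOn ℝ 2 (fun p : ℝ × ℝ × ℝ => u1 p.1 p.2.1 p.2.2) (Set.univ ×ˢ Ω))
    (hu2 : ContDiffOn ℝ 2 (fun p : ℝ × ℝ × ℝ => u2 p.1 p.2.1 p.2.2) (Set.univ ×ˢ Ω))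
    (hD : ContDiffOn ℝ 2 (fun p : ℝ × ℝ × ℝ => D p.1 p.2.1 p.2.2) (Set.univ ×ˢ Ω))
    (hq : ContDiffOn ℝ 2 (fun p : ℝ × ℝ × ℝ => q p.1 p.2.1 p.2.2) (Set.univ ×ˢ Ω))
    (hmom1 : ∀ t x y, (x, y) ∈ Ω →
      deriv (fun s => u1 s x y) t
        + (q t x y * D t x y) * (-(u2 t x y))
        + deriv (fun a => ((u1 t a y) ^ 2 + (u2 t a y) ^ 2) / 2 + g * D t a y) x = 0)
    (hmom2 : ∀ t x y, (x, y) ∈ Ω →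
      deriv (fun s => u2 s x y) t
        + (q t x y * D t x y) * (u1 t x y)
        + deriv (fun b => ((u1 t x b) ^ 2 + (u2 t x b) ^ 2) / 2 + g * D t x b) y = 0)
    (hvort : ∀ t x y, (x, y) ∈ Ω →
      deriv (fun s => q s x y * D s x y) t
        + deriv (fun a => q t a y * D t a y * u1 t a y) x
        + deriv (fun b => q t x b * D t x b * u2 t x b) y = 0) :
    (∀ t x y, (x, y) ∈ Ω →
      deriv (fun s => q s x y * D s x y - absVort u1 u2 f s x y) t = 0) ∧
    ((∀ x y, (x, y) ∈ Ω → q 0 x y * D 0 x y = absVort u1 u2 f 0 x y) →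
      ∀ t x y, (x, y) ∈ Ω → q t x y * D t x y = absVort u1 u2 f t x y) := by
  have key : ∀ t x y, (x, y) ∈ Ω →
      HasDerivAt (fun s => q s x y * D s x y - absVort u1 u2 f s x y) 0 t := by
    intro t x y hxy
    have hU : Set.univ ×ˢ Ω ∈ 𝓝 ((t, x, y) : ℝ × ℝ × ℝ) :=
      (isOpen_univ.prod hΩ).mem_nhds ⟨trivial, hxy⟩
    have hK := ((((hu1.pow 2).add (hu2.pow 2)).div_const 2).add
      (contDiffOn_const (c := g).mul hD)).contDiffAt hU
    have hQ := ((hq.mul hD).contDiffAt hU).differentiableAt two_ne_zero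
    have hslice_x : ∀ᶠ a in 𝓝 x, (a, y) ∈ Ω :=
      (continuous_id.prodMk continuous_const).continuousAt.preimage_mem_nhds (hΩ.mem_nhds hxy)
    have hslice_y : ∀ᶠ b in 𝓝 y, (x, b) ∈ Ω :=
      (continuous_const.prodMk continuous_id).continuousAt.preimage_mem_nhds (hΩ.mem_nhds hxy)
    have hcurl := hasDerivAt_curl_of_momentum (Q := fun t x y => q t x y * D t x y)
      (K := fun t a b => ((u1 t a b) ^ 2 + (u2 t a b) ^ 2) / 2 + g * D t a b)
      (hu1.contDiffAt hU) (hu2.contDiffAt hU) hQ hK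
      (hslice_y.mono fun b hb => hmom1 t x b hb) (hslice_x.mono fun a ha => hmom2 t a y ha)
    have hQt : DifferentiableAt ℝ (fun s => q s x y * D s x y) t := by
      exact hQ.comp t (hasDerivAt_fst_slice t x y).differentiableAt
    refine (hQt.hasDerivAt.fun_sub (hcurl.add_const (f x y))).congr_deriv ?_
    linarith [hvort t x y hxy]
  refine ⟨fun t x y hxy => (key t x y hxy).deriv, fun h0 t x y hxy => ?_⟩
  have hconst := is_const_of_deriv_eq_zero (fun s => (key s x y hxy).differentiableAt)
    (fun s => (key s x y hxy).deriv) t 0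
  linarith [h0 x y hxy]

/-- If on `ℝ × Ω` (with `Ω ⊆ ℝ²` open) both the momentum equation
`∂ₜu + (qD) u⊥ + ∇(½|u|² + g D) = 0` and the vorticity evolution equation
`∂ₜ(qD) + ∇·(qD u) = 0` hold pointwise, for `u, D, q` twice continuously differentiable
and `f` continuously differentiable, then `∂ₜ(qD − ∇⊥·u − f) = 0` on `ℝ × Ω`;
in particular if the diagnostic relation `qD = ∇⊥·u + f` holds at time `t = 0` then
it holds at all times. -/
theorem diagnostic_relation_preserved
    (Ω : Set (ℝ × ℝ)) (hΩ : IsOpen Ω) (g : ℝ)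
    (u1 u2 D q : ℝ → ℝ → ℝ → ℝ) (f : ℝ → ℝ → ℝ)
    (hu1 : ContDiffOn ℝ 2 (fun p : ℝ × ℝ × ℝ => u1 p.1 p.2.1 p.2.2) (Set.univ ×ˢ Ω))
    (hu2 : ContDiffOn ℝ 2 (fun p : ℝ × ℝ × ℝ => u2 p.1 p.2.1 p.2.2) (Set.univ ×ˢ Ω))
    (hD : ContDiffOn ℝ 2 (fun p : ℝ × ℝ × ℝ => D p.1 p.2.1 p.2.2) (Set.univ ×ˢ Ω))
    (hq : ContDiffOn ℝ 2 (fun p : ℝ × ℝ × ℝ => q p.1 p.2.1 p.2.2) (Set.univ ×ˢ Ω))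
    (hf : ContDiffOn ℝ 1 (fun p : ℝ × ℝ => f p.1 p.2) Ω)
    (hmom1 : ∀ t x y, (x, y) ∈ Ω →
      deriv (fun s => u1 s x y) t
        + (q t x y * D t x y) * (-(u2 t x y))
        + deriv (fun a => ((u1 t a y) ^ 2 + (u2 t a y) ^ 2) / 2 + g * D t a y) x = 0)
    (hmom2 : ∀ t x y, (x, y) ∈ Ω →
      deriv (fun s => u2 s x y) t
        + (q t x y * D t x y) * (u1 t x y)
        + deriv (fun b => ((u1 t x b) ^ 2 + (u2 t x b) ^ 2) / 2 + g * D t x b) y = 0)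
    (hvort : ∀ t x y, (x, y) ∈ Ω →
      deriv (fun s => q s x y * D s x y) t
        + deriv (fun a => q t a y * D t a y * u1 t a y) x
        + deriv (fun b => q t x b * D t x b * u2 t x b) y = 0) :
    (∀ t x y, (x, y) ∈ Ω →
      deriv (fun s => q s x y * D s x y - absVort u1 u2 f s x y) t = 0) ∧
    ((∀ x y, (x, y) ∈ Ω → q 0 x y * D 0 x y = absVort u1 u2 f 0 x y) →
      ∀ t x y, (x, y) ∈ Ω → q t x y * D t x y = absVort u1 u2 f t x y) :=
  diagnostic_relation_preserved_general Ω hΩ g u1 u2 D q f hu1 hu2 hD hq hmom1 hmom2 hvort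
end

section
/- Let Q = [0,1]² ⊆ ℝ², g ∈ ℝ, and let u : ℝ × Q → ℝ², D : ℝ × Q → ℝ be twice continuously differentiable, and let α : ℝ × Q → ℝ be any continuous scalar field. Suppose that on ℝ × Q: (i) ∂ₜu + α u⊥ + ∇(½|u|² + g D) = 0; (ii) ∂ₜD + ∇·(D u) = 0; and (iii) the slip boundary condition holds: u₁(t,0,y) = u₁(t,1,y) = 0 for all y ∈ [0,1] and u₂(t,x,0) = u₂(t,x,1) = 0 for all x ∈ [0,1], for every t. Then E(t) := ∫_Q ( ½ D |u|² + ½ g D² ) dx dy is constant in t. -/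
/-!
Write `B = ½|u|² + gD` for the Bernoulli potential and `e = ½D|u|² + ½gD²` for the energy
density. Adding `B` times the continuity equation to `D u ·` the momentum equation gives the local
balance `∂ₜe + ∇·(D u B) = 0`: the term `α u⊥` drops out because `u⊥ · u = 0`, whatever `α` is.
By the divergence theorem on `Q`, `dE/dt` is the boundary integral of `-D B (u · n)`, which the
slip condition makes vanish. Differentiating `E` under the integral sign is legitimate because `e`
is `C¹` on `univ ×ˢ Q`, so its time derivative is bounded on `[t - 1, t + 1] × Q`.
-/

open MeasureTheory Set

theorem ContinuousOn.comp_prodMk_right_univ {T X Y : Type*} [TopologicalSpace T]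
    [TopologicalSpace X] [TopologicalSpace Y] {f : T × X → Y} {s : Set X}
    (hf : ContinuousOn f (univ ×ˢ s)) (t : T) : ContinuousOn (fun p => f (t, p)) s :=
  hf.comp (Continuous.prodMk_right t).continuousOn fun _ hp => ⟨mem_univ t, hp⟩

section ParametricIntegral

variable {E F : Type*} [NormedAddCommGroup E] [NormedSpace ℝ E]
  [NormedAddCommGroup F] [NormedSpace ℝ F]

theorem DifferentiableOn.differentiableAt_of_mem_interior_univ_prod {f : ℝ × E → F}
    {s : Set E} (hf : DifferentiableOn ℝ f (univ ×ˢ s)) (t : ℝ) {p : E} (hp : p ∈ interior s) :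
    DifferentiableAt ℝ f (t, p) :=
  hf.differentiableAt (prod_mem_nhds Filter.univ_mem (mem_interior_iff_mem_nhds.1 hp))

theorem DifferentiableWithinAt.hasDerivAt_comp_prodMk_const {f : ℝ × E → F} {s : Set E}
    {t : ℝ} {p : E} (hp : p ∈ s) (hf : DifferentiableWithinAt ℝ f (univ ×ˢ s) (t, p)) :
    HasDerivAt (fun τ => f (τ, p)) (fderivWithin ℝ f (univ ×ˢ s) (t, p) (1, 0)) t := by
  have hline : HasDerivAt (fun τ : ℝ => (τ, p)) ((1 : ℝ), (0 : E)) t :=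
    (hasDerivAt_id t).prodMk (hasDerivAt_const t p)
  exact hasDerivWithinAt_univ.mp <| hf.hasFDerivWithinAt.comp_hasDerivWithinAt t
    hline.hasDerivWithinAt fun τ _ => show (τ, p) ∈ univ ×ˢ s from ⟨mem_univ τ, hp⟩

variable [MeasurableSpace E] [OpensMeasurableSpace E] {μ : Measure E}
  [IsFiniteMeasureOnCompacts μ]

theorem hasDerivAt_setIntegral_of_contDiffOn {K : Set E} (hK : IsCompact K)
    (hKu : UniqueDiffOn ℝ K) {f : ℝ → E → F}
    (hf : ContDiffOn ℝ 1 (fun q : ℝ × E => f q.1 q.2) (univ ×ˢ K)) (t₀ : ℝ) :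
    IntegrableOn (fun p => deriv (fun t => f t p) t₀) K μ ∧
      HasDerivAt (fun t => ∫ p in K, f t p ∂μ) (∫ p in K, deriv (fun t => f t p) t₀ ∂μ) t₀ := by
  set f' := fun r => fderivWithin ℝ (fun q : ℝ × E => f q.1 q.2) (univ ×ˢ K) r (1, 0)
  have hf'c : ContinuousOn f' (univ ×ˢ K) :=
    (hf.continuousOn_fderivWithin (uniqueDiffOn_univ.prod hKu) le_rfl).clm_apply
      continuousOn_const
  have hderiv : ∀ t, ∀ p ∈ K, HasDerivAt (fun τ => f τ p) (f' (t, p)) t := fun t p hp =>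
    ((hf.differentiableOn one_ne_zero) _ ⟨mem_univ t, hp⟩).hasDerivAt_comp_prodMk_const hp
  obtain ⟨C, hC⟩ := (isCompact_Icc.prod hK).exists_bound_of_continuousOn
    (hf'c.mono (prod_mono (subset_univ (Icc (t₀ - 1) (t₀ + 1))) subset_rfl))
  have hdominated := hasDerivAt_integral_of_dominated_loc_of_deriv_le (μ := μ.restrict K)
    (F' := fun t p => f' (t, p)) (bound := fun _ => C) (Metric.ball_mem_nhds t₀ one_pos)
    (.of_forall fun t =>
      (hf.continuousOn.comp_prodMk_right_univ t).aestronglyMeasurable_of_isCompact hK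
        hK.measurableSet)
    ((hf.continuousOn.comp_prodMk_right_univ t₀).integrableOn_compact hK)
    ((hf'c.comp_prodMk_right_univ t₀).aestronglyMeasurable_of_isCompact hK hK.measurableSet) ?_
    (integrableOn_const hK.measure_ne_top)
    ((ae_restrict_iff' hK.measurableSet).2 (.of_forall fun p hp t _ => hderiv t p hp))
  · have hcongr : EqOn (fun p => deriv (fun t => f t p) t₀) (fun p => f' (t₀, p)) K :=
      fun p hp => (hderiv t₀ p hp).deriv
    exact ⟨IntegrableOn.congr_fun (hdominated.1 : IntegrableOn _ K μ) hcongr.symm hK.measurableSet,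
      setIntegral_congr_fun hK.measurableSet hcongr ▸ hdominated.2⟩
  · refine (ae_restrict_iff' hK.measurableSet).2 (.of_forall fun p hp t ht => hC _ ⟨?_, hp⟩)
    rw [Metric.mem_ball, Real.dist_eq, abs_lt] at ht
    constructor <;> linarith [ht.1, ht.2]

end ParametricIntegral

theorem Convex.ae_restrict_mem_interior {E : Type*} [NormedAddCommGroup E] [NormedSpace ℝ E]
    [MeasurableSpace E] [BorelSpace E] [FiniteDimensional ℝ E] {μ : Measure E}
    [μ.IsAddHaarMeasure] {s : Set E} (hs : Convex ℝ s) : ∀ᵐ p ∂μ.restrict s, p ∈ interior s := by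
  rw [← Measure.restrict_congr_set (interior_ae_eq_of_null_frontier (hs.addHaar_frontier μ))]
  exact ae_restrict_mem isOpen_interior.measurableSet

section Plane

variable {E : Type*} [NormedAddCommGroup E] [NormedSpace ℝ E]

theorem DifferentiableAt.fderiv_apply_one_zero {G : ℝ × ℝ → E} {x y : ℝ}
    (h : DifferentiableAt ℝ G (x, y)) : fderiv ℝ G (x, y) (1, 0) = deriv (fun a => G (a, y)) x :=
  (h.hasFDerivAt.comp_hasDerivAt x ((hasDerivAt_id x).prodMk (hasDerivAt_const x y))).deriv.symm

theorem DifferentiableAt.fderiv_apply_zero_one {G : ℝ × ℝ → E} {x y : ℝ}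
    (h : DifferentiableAt ℝ G (x, y)) : fderiv ℝ G (x, y) (0, 1) = deriv (fun b => G (x, b)) y :=
  (h.hasFDerivAt.comp_hasDerivAt y ((hasDerivAt_const y x).prodMk (hasDerivAt_id y))).deriv.symm

theorem setIntegral_divergence_prod_Icc_eq_zero [CompleteSpace E] (f g : ℝ × ℝ → E)
    (f' g' : ℝ × ℝ → ℝ × ℝ →L[ℝ] E) {a₁ b₁ a₂ b₂ : ℝ} (h₁ : a₁ ≤ b₁) (h₂ : a₂ ≤ b₂)
    (Hcf : ContinuousOn f (Icc a₁ b₁ ×ˢ Icc a₂ b₂))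
    (Hcg : ContinuousOn g (Icc a₁ b₁ ×ˢ Icc a₂ b₂))
    (Hdf : ∀ p ∈ Ioo a₁ b₁ ×ˢ Ioo a₂ b₂, HasFDerivAt f (f' p) p)
    (Hdg : ∀ p ∈ Ioo a₁ b₁ ×ˢ Ioo a₂ b₂, HasFDerivAt g (g' p) p)
    (Hi : IntegrableOn (fun p => f' p (1, 0) + g' p (0, 1)) (Icc a₁ b₁ ×ˢ Icc a₂ b₂))
    (hf : ∀ y ∈ Icc a₂ b₂, f (a₁, y) = 0 ∧ f (b₁, y) = 0)
    (hg : ∀ x ∈ Icc a₁ b₁, g (x, a₂) = 0 ∧ g (x, b₂) = 0) :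
    ∫ p in Icc a₁ b₁ ×ˢ Icc a₂ b₂, f' p (1, 0) + g' p (0, 1) = 0 := by
  have vanish : ∀ {φ : ℝ → E} {a b : ℝ}, a ≤ b → (∀ x ∈ Icc a b, φ x = 0) →
      ∫ x in a..b, φ x = 0 := fun hab hφ => by
    rw [intervalIntegral.integral_congr (g := fun _ => 0) fun x hx => hφ x (uIcc_of_le hab ▸ hx),
      intervalIntegral.integral_zero]
  rw [Icc_prod_Icc] at Hcf Hcg Hi ⊢
  rw [integral_divergence_prod_Icc_of_hasFDerivAt_of_le f g f' g' (a₁, a₂) (b₁, b₂) ⟨h₁, h₂⟩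
    Hcf Hcg Hdf Hdg Hi, vanish h₁ fun x hx => (hg x hx).1, vanish h₁ fun x hx => (hg x hx).2,
    vanish h₂ fun y hy => (hf y hy).1, vanish h₂ fun y hy => (hf y hy).2]
  simp

end Plane

noncomputable def energyDensity (g : ℝ) (u1 u2 D : ℝ → ℝ → ℝ → ℝ) (t x y : ℝ) : ℝ :=
  D t x y * (u1 t x y ^ 2 + u2 t x y ^ 2) / 2 + g * D t x y ^ 2 / 2

noncomputable def bernoulliPotential (g : ℝ) (u1 u2 D : ℝ → ℝ → ℝ → ℝ) (t x y : ℝ) : ℝ :=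
  (u1 t x y ^ 2 + u2 t x y ^ 2) / 2 + g * D t x y

noncomputable def energyFlux (g : ℝ) (u1 u2 D v : ℝ → ℝ → ℝ → ℝ) (t : ℝ) (p : ℝ × ℝ) : ℝ :=
  D t p.1 p.2 * v t p.1 p.2 * bernoulliPotential g u1 u2 D t p.1 p.2

theorem differentiableAt_slices {u : ℝ → ℝ → ℝ → ℝ} {t x y : ℝ}
    (hu : DifferentiableAt ℝ (fun q : ℝ × ℝ × ℝ => u q.1 q.2.1 q.2.2) (t, x, y)) :
    DifferentiableAt ℝ (fun s => u s x y) t ∧ DifferentiableAt ℝ (fun a => u t a y) x ∧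
      DifferentiableAt ℝ (fun b => u t x b) y ∧
        DifferentiableAt ℝ (fun p : ℝ × ℝ => u t p.1 p.2) (x, y) :=
  ⟨(hu.comp t (by fun_prop : DifferentiableAt ℝ (fun s : ℝ => (s, x, y)) t) :),
    (hu.comp x (by fun_prop : DifferentiableAt ℝ (fun a : ℝ => (t, a, y)) x) :),
    (hu.comp y (by fun_prop : DifferentiableAt ℝ (fun b : ℝ => (t, x, b)) y) :),
    (hu.comp (x, y) (by fun_prop : DifferentiableAt ℝ (fun p : ℝ × ℝ => (t, p)) (x, y)) :)⟩

section ShallowWater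

variable (g : ℝ) {u1 u2 D : ℝ → ℝ → ℝ → ℝ}

theorem differentiableAt_energyFlux {v : ℝ → ℝ → ℝ → ℝ} {t x y : ℝ}
    (hu1 : DifferentiableAt ℝ (fun q : ℝ × ℝ × ℝ => u1 q.1 q.2.1 q.2.2) (t, x, y))
    (hu2 : DifferentiableAt ℝ (fun q : ℝ × ℝ × ℝ => u2 q.1 q.2.1 q.2.2) (t, x, y))
    (hD : DifferentiableAt ℝ (fun q : ℝ × ℝ × ℝ => D q.1 q.2.1 q.2.2) (t, x, y))
    (hv : DifferentiableAt ℝ (fun q : ℝ × ℝ × ℝ => v q.1 q.2.1 q.2.2) (t, x, y)) :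
    DifferentiableAt ℝ (energyFlux g u1 u2 D v t) (x, y) := by
  have h1 := (differentiableAt_slices hu1).2.2.2
  have h2 := (differentiableAt_slices hu2).2.2.2
  have h3 := (differentiableAt_slices hD).2.2.2
  have h4 := (differentiableAt_slices hv).2.2.2
  unfold energyFlux bernoulliPotential
  fun_prop

theorem continuousOn_energyFlux {v : ℝ → ℝ → ℝ → ℝ} {s : Set (ℝ × ℝ)} (t : ℝ)
    (hu1 : ContinuousOn (fun q : ℝ × ℝ × ℝ => u1 q.1 q.2.1 q.2.2) (univ ×ˢ s))
    (hu2 : ContinuousOn (fun q : ℝ × ℝ × ℝ => u2 q.1 q.2.1 q.2.2) (univ ×ˢ s))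
    (hD : ContinuousOn (fun q : ℝ × ℝ × ℝ => D q.1 q.2.1 q.2.2) (univ ×ˢ s))
    (hv : ContinuousOn (fun q : ℝ × ℝ × ℝ => v q.1 q.2.1 q.2.2) (univ ×ˢ s)) :
    ContinuousOn (energyFlux g u1 u2 D v t) s := by
  have h1 := hu1.comp_prodMk_right_univ t
  have h2 := hu2.comp_prodMk_right_univ t
  have h3 := hD.comp_prodMk_right_univ t
  have h4 := hv.comp_prodMk_right_univ t
  unfold energyFlux bernoulliPotential
  fun_prop

theorem deriv_energyDensity_eq_neg_div_energyFlux (c : ℝ) {t x y : ℝ}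
    (hu1 : DifferentiableAt ℝ (fun q : ℝ × ℝ × ℝ => u1 q.1 q.2.1 q.2.2) (t, x, y))
    (hu2 : DifferentiableAt ℝ (fun q : ℝ × ℝ × ℝ => u2 q.1 q.2.1 q.2.2) (t, x, y))
    (hD : DifferentiableAt ℝ (fun q : ℝ × ℝ × ℝ => D q.1 q.2.1 q.2.2) (t, x, y))
    (hmom1 : deriv (fun s => u1 s x y) t + c * -u2 t x y
      + deriv (fun a => bernoulliPotential g u1 u2 D t a y) x = 0)
    (hmom2 : deriv (fun s => u2 s x y) t + c * u1 t x y
      + deriv (fun b => bernoulliPotential g u1 u2 D t x b) y = 0)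
    (hcont : deriv (fun s => D s x y) t + deriv (fun a => D t a y * u1 t a y) x
      + deriv (fun b => D t x b * u2 t x b) y = 0) :
    deriv (fun s => energyDensity g u1 u2 D s x y) t =
      -(deriv (fun a => energyFlux g u1 u2 D u1 t (a, y)) x
        + deriv (fun b => energyFlux g u1 u2 D u2 t (x, b)) y) := by
  obtain ⟨hu1t, hu1x, hu1y, -⟩ := differentiableAt_slices hu1
  obtain ⟨hu2t, hu2x, hu2y, -⟩ := differentiableAt_slices hu2
  obtain ⟨hDt, hDx, hDy, -⟩ := differentiableAt_slices hD
  have hBx : DifferentiableAt ℝ (fun a => bernoulliPotential g u1 u2 D t a y) x := by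
    unfold bernoulliPotential; fun_prop
  have hBy : DifferentiableAt ℝ (fun b => bernoulliPotential g u1 u2 D t x b) y := by
    unfold bernoulliPotential; fun_prop
  have hEt : HasDerivAt (fun s => energyDensity g u1 u2 D s x y)
      (deriv (fun s => D s x y) t * bernoulliPotential g u1 u2 D t x y + D t x y *
        (u1 t x y * deriv (fun s => u1 s x y) t + u2 t x y * deriv (fun s => u2 s x y) t)) t := by
    refine (((hDt.hasDerivAt.mul ((hu1t.hasDerivAt.pow 2).add (hu2t.hasDerivAt.pow 2))).div_const
      2).add (((hDt.hasDerivAt.pow 2).const_mul g).div_const 2)).congr_deriv ?_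
    simp only [Pi.add_apply, Pi.pow_apply, bernoulliPotential]
    push_cast
    ring
  simp only [energyFlux]
  rw [hEt.deriv, deriv_fun_mul (by fun_prop) hBx, deriv_fun_mul (by fun_prop) hBy]
  linear_combination bernoulliPotential g u1 u2 D t x y * hcont + D t x y * u1 t x y * hmom1
    + D t x y * u2 t x y * hmom2

variable {α : ℝ → ℝ → ℝ → ℝ} {t : ℝ}
  (hu1 : DifferentiableOn ℝ (fun q : ℝ × ℝ × ℝ => u1 q.1 q.2.1 q.2.2)
    (univ ×ˢ (Icc (0:ℝ) 1 ×ˢ Icc (0:ℝ) 1)))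
  (hu2 : DifferentiableOn ℝ (fun q : ℝ × ℝ × ℝ => u2 q.1 q.2.1 q.2.2)
    (univ ×ˢ (Icc (0:ℝ) 1 ×ˢ Icc (0:ℝ) 1)))
  (hD : DifferentiableOn ℝ (fun q : ℝ × ℝ × ℝ => D q.1 q.2.1 q.2.2)
    (univ ×ˢ (Icc (0:ℝ) 1 ×ˢ Icc (0:ℝ) 1)))
  (hmom1 : ∀ x y, (x, y) ∈ Ioo (0:ℝ) 1 ×ˢ Ioo (0:ℝ) 1 →
    deriv (fun s => u1 s x y) t + α t x y * -u2 t x y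
      + deriv (fun a => bernoulliPotential g u1 u2 D t a y) x = 0)
  (hmom2 : ∀ x y, (x, y) ∈ Ioo (0:ℝ) 1 ×ˢ Ioo (0:ℝ) 1 →
    deriv (fun s => u2 s x y) t + α t x y * u1 t x y
      + deriv (fun b => bernoulliPotential g u1 u2 D t x b) y = 0)
  (hcont : ∀ x y, (x, y) ∈ Ioo (0:ℝ) 1 ×ˢ Ioo (0:ℝ) 1 →
    deriv (fun s => D s x y) t + deriv (fun a => D t a y * u1 t a y) x
      + deriv (fun b => D t x b * u2 t x b) y = 0)
include hu1 hu2 hD hmom1 hmom2 hcont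

theorem ae_deriv_energyDensity_eq_neg_div_energyFlux :
    (fun p : ℝ × ℝ => deriv (fun s => energyDensity g u1 u2 D s p.1 p.2) t)
      =ᵐ[volume.restrict (Icc 0 1 ×ˢ Icc 0 1)] fun p =>
        -(fderiv ℝ (energyFlux g u1 u2 D u1 t) p (1, 0)
          + fderiv ℝ (energyFlux g u1 u2 D u2 t) p (0, 1)) := by
  filter_upwards [((convex_Icc (0:ℝ) 1).prod (convex_Icc 0 1)).ae_restrict_mem_interior]
    with ⟨x, y⟩ hp
  have hu1' := hu1.differentiableAt_of_mem_interior_univ_prod t hp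
  have hu2' := hu2.differentiableAt_of_mem_interior_univ_prod t hp
  have hD' := hD.differentiableAt_of_mem_interior_univ_prod t hp
  rw [interior_prod_eq, interior_Icc] at hp
  rw [(differentiableAt_energyFlux g hu1' hu2' hD' hu1').fderiv_apply_one_zero,
    (differentiableAt_energyFlux g hu1' hu2' hD' hu2').fderiv_apply_zero_one]
  exact deriv_energyDensity_eq_neg_div_energyFlux g (α t x y) hu1' hu2' hD' (hmom1 x y hp)
    (hmom2 x y hp) (hcont x y hp)

theorem setIntegral_deriv_energyDensity_eq_zero
    (hbc1 : ∀ y ∈ Icc (0:ℝ) 1, u1 t 0 y = 0 ∧ u1 t 1 y = 0)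
    (hbc2 : ∀ x ∈ Icc (0:ℝ) 1, u2 t x 0 = 0 ∧ u2 t x 1 = 0)
    (hint : IntegrableOn (fun p : ℝ × ℝ => deriv (fun s => energyDensity g u1 u2 D s p.1 p.2) t)
      (Icc (0:ℝ) 1 ×ˢ Icc (0:ℝ) 1)) :
    ∫ p in Icc (0:ℝ) 1 ×ˢ Icc (0:ℝ) 1, deriv (fun s => energyDensity g u1 u2 D s p.1 p.2) t
      = 0 := by
  have hae := ae_deriv_energyDensity_eq_neg_div_energyFlux g hu1 hu2 hD hmom1 hmom2 hcont
  have hdiff : ∀ {v : ℝ → ℝ → ℝ → ℝ}, DifferentiableOn ℝ (fun q : ℝ × ℝ × ℝ => v q.1 q.2.1 q.2.2)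
      (univ ×ˢ (Icc (0:ℝ) 1 ×ˢ Icc (0:ℝ) 1)) → ∀ p ∈ Ioo (0:ℝ) 1 ×ˢ Ioo (0:ℝ) 1,
        HasFDerivAt (energyFlux g u1 u2 D v t) (fderiv ℝ (energyFlux g u1 u2 D v t) p) p := by
    intro v hv p hp
    rw [← interior_Icc, ← interior_prod_eq] at hp
    exact (differentiableAt_energyFlux g (hu1.differentiableAt_of_mem_interior_univ_prod t hp)
      (hu2.differentiableAt_of_mem_interior_univ_prod t hp)
      (hD.differentiableAt_of_mem_interior_univ_prod t hp)
      (hv.differentiableAt_of_mem_interior_univ_prod t hp)).hasFDerivAt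
  rw [integral_congr_ae hae, integral_neg, setIntegral_divergence_prod_Icc_eq_zero _ _ _ _
    zero_le_one zero_le_one
    (continuousOn_energyFlux g t hu1.continuousOn hu2.continuousOn hD.continuousOn hu1.continuousOn)
    (continuousOn_energyFlux g t hu1.continuousOn hu2.continuousOn hD.continuousOn hu2.continuousOn)
    (hdiff hu1) (hdiff hu2)
    (by simpa only [Pi.neg_def, neg_neg] using (hint.congr_fun_ae hae).neg)
    (fun y hy => by simp [energyFlux, hbc1 y hy]) (fun x hx => by simp [energyFlux, hbc2 x hx]),
    neg_zero]

end ShallowWater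

theorem energy_conserved_modified_pv_general
    (g : ℝ) (u1 u2 D α : ℝ → ℝ → ℝ → ℝ)
    (hu1 : ContDiffOn ℝ 2 (fun p : ℝ × ℝ × ℝ => u1 p.1 p.2.1 p.2.2)
      (Set.univ ×ˢ (Set.Icc (0:ℝ) 1 ×ˢ Set.Icc (0:ℝ) 1)))
    (hu2 : ContDiffOn ℝ 2 (fun p : ℝ × ℝ × ℝ => u2 p.1 p.2.1 p.2.2)
      (Set.univ ×ˢ (Set.Icc (0:ℝ) 1 ×ˢ Set.Icc (0:ℝ) 1)))
    (hD : ContDiffOn ℝ 2 (fun p : ℝ × ℝ × ℝ => D p.1 p.2.1 p.2.2)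
      (Set.univ ×ˢ (Set.Icc (0:ℝ) 1 ×ˢ Set.Icc (0:ℝ) 1)))
    (hmom1 : ∀ t x y, (x, y) ∈ Set.Icc (0:ℝ) 1 ×ˢ Set.Icc (0:ℝ) 1 →
      deriv (fun s => u1 s x y) t
        + α t x y * (-(u2 t x y))
        + deriv (fun a => ((u1 t a y) ^ 2 + (u2 t a y) ^ 2) / 2 + g * D t a y) x = 0)
    (hmom2 : ∀ t x y, (x, y) ∈ Set.Icc (0:ℝ) 1 ×ˢ Set.Icc (0:ℝ) 1 →
      deriv (fun s => u2 s x y) t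
        + α t x y * (u1 t x y)
        + deriv (fun b => ((u1 t x b) ^ 2 + (u2 t x b) ^ 2) / 2 + g * D t x b) y = 0)
    (hcont : ∀ t x y, (x, y) ∈ Set.Icc (0:ℝ) 1 ×ˢ Set.Icc (0:ℝ) 1 →
      deriv (fun s => D s x y) t
        + deriv (fun a => D t a y * u1 t a y) x
        + deriv (fun b => D t x b * u2 t x b) y = 0)
    (hbc1 : ∀ t y, y ∈ Set.Icc (0:ℝ) 1 → u1 t 0 y = 0 ∧ u1 t 1 y = 0)
    (hbc2 : ∀ t x, x ∈ Set.Icc (0:ℝ) 1 → u2 t x 0 = 0 ∧ u2 t x 1 = 0) :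
    ∀ t₁ t₂ : ℝ,
      (∫ p in Set.Icc (0:ℝ) 1 ×ˢ Set.Icc (0:ℝ) 1,
        (D t₁ p.1 p.2 * ((u1 t₁ p.1 p.2) ^ 2 + (u2 t₁ p.1 p.2) ^ 2) / 2
          + g * (D t₁ p.1 p.2) ^ 2 / 2))
      = ∫ p in Set.Icc (0:ℝ) 1 ×ˢ Set.Icc (0:ℝ) 1,
        (D t₂ p.1 p.2 * ((u1 t₂ p.1 p.2) ^ 2 + (u2 t₂ p.1 p.2) ^ 2) / 2
          + g * (D t₂ p.1 p.2) ^ 2 / 2) := by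
  have he : ContDiffOn ℝ 1 (fun q : ℝ × ℝ × ℝ => energyDensity g u1 u2 D q.1 q.2.1 q.2.2)
      (univ ×ˢ (Icc 0 1 ×ˢ Icc 0 1)) :=
    (((hD.mul ((hu1.pow 2).add (hu2.pow 2))).div_const 2).add
      ((contDiffOn_const.mul (hD.pow 2)).div_const 2)).of_le one_le_two
  have hsub : Ioo (0:ℝ) 1 ×ˢ Ioo (0:ℝ) 1 ⊆ Icc 0 1 ×ˢ Icc 0 1 :=
    prod_mono Ioo_subset_Icc_self Ioo_subset_Icc_self
  have hE : ∀ t, HasDerivAt (fun τ => ∫ p in Icc (0:ℝ) 1 ×ˢ Icc (0:ℝ) 1,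
      energyDensity g u1 u2 D τ p.1 p.2) 0 t := by
    intro t
    obtain ⟨hint, hderiv⟩ := hasDerivAt_setIntegral_of_contDiffOn (μ := volume)
      (f := fun τ p => energyDensity g u1 u2 D τ p.1 p.2) (isCompact_Icc.prod isCompact_Icc)
      ((uniqueDiffOn_Icc one_pos).prod (uniqueDiffOn_Icc one_pos)) he t
    rwa [setIntegral_deriv_energyDensity_eq_zero g (hu1.differentiableOn two_ne_zero)
      (hu2.differentiableOn two_ne_zero) (hD.differentiableOn two_ne_zero)
      (fun x y h => hmom1 t x y (hsub h)) (fun x y h => hmom2 t x y (hsub h))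
      (fun x y h => hcont t x y (hsub h)) (hbc1 t) (hbc2 t) hint] at hderiv
  exact fun t₁ t₂ => is_const_of_deriv_eq_zero (fun t => (hE t).differentiableAt)
    (fun t => (hE t).deriv) t₁ t₂

/-- On the unit square `Q = [0,1]²`, if the modified momentum equation
`∂ₜu + α u⊥ + ∇(½|u|² + g D) = 0` with an arbitrary continuous coefficient field `α`,
the continuity equation `∂ₜD + ∇·(D u) = 0`, and the slip boundary condition
(vanishing of the normal component of `u` on `∂Q`) hold, for `u, D` twice continuously
differentiable, then the energy `E(t) = ∫_Q ½ D |u|² + ½ g D² dx dy` is constant. -/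
theorem energy_conserved_modified_pv
    (g : ℝ) (u1 u2 D α : ℝ → ℝ → ℝ → ℝ)
    (hu1 : ContDiffOn ℝ 2 (fun p : ℝ × ℝ × ℝ => u1 p.1 p.2.1 p.2.2)
      (Set.univ ×ˢ (Set.Icc (0:ℝ) 1 ×ˢ Set.Icc (0:ℝ) 1)))
    (hu2 : ContDiffOn ℝ 2 (fun p : ℝ × ℝ × ℝ => u2 p.1 p.2.1 p.2.2)
      (Set.univ ×ˢ (Set.Icc (0:ℝ) 1 ×ˢ Set.Icc (0:ℝ) 1)))
    (hD : ContDiffOn ℝ 2 (fun p : ℝ × ℝ × ℝ => D p.1 p.2.1 p.2.2)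
      (Set.univ ×ˢ (Set.Icc (0:ℝ) 1 ×ˢ Set.Icc (0:ℝ) 1)))
    (hα : ContinuousOn (fun p : ℝ × ℝ × ℝ => α p.1 p.2.1 p.2.2)
      (Set.univ ×ˢ (Set.Icc (0:ℝ) 1 ×ˢ Set.Icc (0:ℝ) 1)))
    (hmom1 : ∀ t x y, (x, y) ∈ Set.Icc (0:ℝ) 1 ×ˢ Set.Icc (0:ℝ) 1 →
      deriv (fun s => u1 s x y) t
        + α t x y * (-(u2 t x y))
        + deriv (fun a => ((u1 t a y) ^ 2 + (u2 t a y) ^ 2) / 2 + g * D t a y) x = 0)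
    (hmom2 : ∀ t x y, (x, y) ∈ Set.Icc (0:ℝ) 1 ×ˢ Set.Icc (0:ℝ) 1 →
      deriv (fun s => u2 s x y) t
        + α t x y * (u1 t x y)
        + deriv (fun b => ((u1 t x b) ^ 2 + (u2 t x b) ^ 2) / 2 + g * D t x b) y = 0)
    (hcont : ∀ t x y, (x, y) ∈ Set.Icc (0:ℝ) 1 ×ˢ Set.Icc (0:ℝ) 1 →
      deriv (fun s => D s x y) t
        + deriv (fun a => D t a y * u1 t a y) x
        + deriv (fun b => D t x b * u2 t x b) y = 0)
    (hbc1 : ∀ t y, y ∈ Set.Icc (0:ℝ) 1 → u1 t 0 y = 0 ∧ u1 t 1 y = 0)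
    (hbc2 : ∀ t x, x ∈ Set.Icc (0:ℝ) 1 → u2 t x 0 = 0 ∧ u2 t x 1 = 0) :
    ∀ t₁ t₂ : ℝ,
      (∫ p in Set.Icc (0:ℝ) 1 ×ˢ Set.Icc (0:ℝ) 1,
        (D t₁ p.1 p.2 * ((u1 t₁ p.1 p.2) ^ 2 + (u2 t₁ p.1 p.2) ^ 2) / 2
          + g * (D t₁ p.1 p.2) ^ 2 / 2))
      = ∫ p in Set.Icc (0:ℝ) 1 ×ˢ Set.Icc (0:ℝ) 1,
        (D t₂ p.1 p.2 * ((u1 t₂ p.1 p.2) ^ 2 + (u2 t₂ p.1 p.2) ^ 2) / 2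
          + g * (D t₂ p.1 p.2) ^ 2 / 2) :=
  energy_conserved_modified_pv_general g u1 u2 D α hu1 hu2 hD hmom1 hmom2 hcont hbc1 hbc2
end

section
/- Let E be a finite-dimensional real inner product space, H : E → ℝ continuously differentiable, and J : E → (E →ₗ[ℝ] E) a map such that J(z) is skew for every z, i.e. ⟪J(z) v, v⟫ = 0 for all z, v ∈ E. Let Δt ∈ ℝ and suppose z₀, z₁ ∈ E satisfy the energy-preserving Poisson integrator relation z₁ = z₀ + Δt • J((z₀ + z₁)/2) ḡ, where ḡ := ∫₀¹ ∇H(z₀ + s • (z₁ − z₀)) ds is the averaged gradient along the segment from z₀ to z₁. Then H(z₁) = H(z₀). -/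
/-!
The fundamental theorem of calculus along the segment gives the exact discrete chain rule
`H z₁ - H z₀ = ⟪z₁ - z₀, ḡ⟫` for the averaged gradient `ḡ`. The integrator makes `z₁ - z₀` a
multiple of `J(·) ḡ`, which is orthogonal to `ḡ` by skewness.
-/

open scoped RealInnerProductSpace

section

variable {E : Type*} [NormedAddCommGroup E] [InnerProductSpace ℝ E] [CompleteSpace E]
  {H : E → ℝ}

theorem ContDiff.continuous_gradient (hH : ContDiff ℝ 1 H) : Continuous (gradient H) :=
  (InnerProductSpace.toDual ℝ E).symm.continuous.comp (hH.continuous_fderiv one_ne_zero)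

theorem HasGradientAt.hasDerivAt_comp_lineMap {x y g : E} {s : ℝ}
    (hH : HasGradientAt H g (x + s • (y - x))) :
    HasDerivAt (fun t : ℝ => H (x + t • (y - x))) ⟪y - x, g⟫ s := by
  have hline : HasDerivAt (fun t : ℝ => x + t • (y - x)) (y - x) s := by
    simpa using ((hasDerivAt_id s).smul_const (y - x)).const_add x
  rw [real_inner_comm]
  exact hH.hasFDerivAt.comp_hasDerivAt s hline

theorem ContDiff.sub_eq_inner_integral_gradient_segment (hH : ContDiff ℝ 1 H) (x y : E) :
    H y - H x = ⟪y - x, ∫ s in (0:ℝ)..1, gradient H (x + s • (y - x))⟫ := by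
  have hdiff : Differentiable ℝ H := hH.differentiable one_ne_zero
  have hcont : Continuous fun s : ℝ => gradient H (x + s • (y - x)) :=
    hH.continuous_gradient.comp (by fun_prop)
  calc H y - H x = H (x + (1:ℝ) • (y - x)) - H (x + (0:ℝ) • (y - x)) := by simp
    _ = ∫ s in (0:ℝ)..1, ⟪y - x, gradient H (x + s • (y - x))⟫ :=
      (intervalIntegral.integral_eq_sub_of_hasDerivAt
        (fun s _ => (hdiff _).hasGradientAt.hasDerivAt_comp_lineMap)
        ((continuous_const.inner hcont).intervalIntegrable 0 1)).symm
    _ = ⟪y - x, ∫ s in (0:ℝ)..1, gradient H (x + s • (y - x))⟫ :=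
      (innerSL ℝ (y - x)).intervalIntegral_comp_comm (hcont.intervalIntegrable 0 1)

end

/-- Exact energy conservation of the energy-preserving Poisson integrator of Cohen and
Hairer: if `J(z)` is skew for every `z` and `z₁ = z₀ + Δt J((z₀+z₁)/2) ḡ` where
`ḡ = ∫₀¹ ∇H(z₀ + s(z₁ − z₀)) ds` is the averaged gradient, then `H(z₁) = H(z₀)`. -/
theorem poisson_integrator_conserves_energy
    {E : Type*} [NormedAddCommGroup E] [InnerProductSpace ℝ E] [FiniteDimensional ℝ E]
    (H : E → ℝ) (hH : ContDiff ℝ 1 H)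
    (J : E → (E →ₗ[ℝ] E)) (hJ : ∀ z v, ⟪J z v, v⟫ = 0)
    (Δt : ℝ) (z₀ z₁ : E)
    (hrel : z₁ = z₀ + Δt • J ((2:ℝ)⁻¹ • (z₀ + z₁))
      (∫ s in (0:ℝ)..1, gradient H (z₀ + s • (z₁ - z₀)))) :
    H z₁ = H z₀ := by
  set g := ∫ s in (0:ℝ)..1, gradient H (z₀ + s • (z₁ - z₀))
  have hΔH : H z₁ - H z₀ = ⟪z₁ - z₀, g⟫ := hH.sub_eq_inner_integral_gradient_segment z₀ z₁
  have hskew : ⟪z₁ - z₀, g⟫ = 0 := by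
    rw [sub_eq_of_eq_add' hrel, real_inner_smul_left, hJ, mul_zero]
  exact sub_eq_zero.mp (hΔH.trans hskew)
end

section
/- Let E be a finite-dimensional real inner product space, A : E →ₗ[ℝ] E a symmetric linear map (⟪A x, y⟫ = ⟪x, A y⟫ for all x, y), b ∈ E, and define the quadratic Hamiltonian H(z) := ½ ⟪A z, z⟫ + ⟪b, z⟫. Let J : E → (E →ₗ[ℝ] E) satisfy ⟪J(z) v, v⟫ = 0 for all z, v ∈ E. Let Δt ∈ ℝ and suppose z₀, z₁ ∈ E satisfy the implicit midpoint relation z₁ = z₀ + Δt • J(m)(A m + b) with m := (z₀ + z₁)/2. Then H(z₁) = H(z₀). -/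
open scoped RealInnerProductSpace

/-!
Since `∇H` is affine, the gradient at the midpoint is an exact discrete gradient of `H`:
`H(z₁) - H(z₀) = ⟪∇H(m), z₁ - z₀⟫`. The midpoint step `z₁ - z₀ = Δt J(m) ∇H(m)` is orthogonal
to `∇H(m)` because `J(m)` is skew, so the energy difference vanishes.
-/

section QuadraticHamiltonian

variable {E : Type*} [NormedAddCommGroup E] [InnerProductSpace ℝ E]

noncomputable def quadraticHamiltonian (A : E →ₗ[ℝ] E) (b z : E) : ℝ :=
  (1/2 : ℝ) * ⟪A z, z⟫ + ⟪b, z⟫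

theorem LinearMap.IsSymmetric.inner_map_self_sub {A : E →ₗ[ℝ] E} (hA : A.IsSymmetric)
    (x y : E) : ⟪A y, y⟫ - ⟪A x, x⟫ = ⟪A (x + y), y - x⟫ := by
  have hxy : ⟪A x, y⟫ = ⟪A y, x⟫ := by rw [hA, real_inner_comm]
  rw [map_add, inner_add_left, inner_sub_right, inner_sub_right, hxy]
  ring

theorem quadraticHamiltonian_sub_eq_inner_midpoint {A : E →ₗ[ℝ] E} (hA : A.IsSymmetric)
    (b x y : E) :
    quadraticHamiltonian A b y - quadraticHamiltonian A b x
      = ⟪A ((2:ℝ)⁻¹ • (x + y)) + b, y - x⟫ := by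
  have hquad := hA.inner_map_self_sub x y
  rw [map_smul, inner_add_left, real_inner_smul_left, ← hquad, inner_sub_right]
  unfold quadraticHamiltonian
  ring

end QuadraticHamiltonian

theorem implicit_midpoint_conserves_quadratic_hamiltonian_general
    {E : Type*} [NormedAddCommGroup E] [InnerProductSpace ℝ E]
    (A : E →ₗ[ℝ] E) (hA : ∀ x y : E, ⟪A x, y⟫ = ⟪x, A y⟫) (b : E)
    (J : E → (E →ₗ[ℝ] E)) (hJ : ∀ z v, ⟪J z v, v⟫ = 0)
    (Δt : ℝ) (z₀ z₁ : E)
    (hrel : z₁ = z₀ + Δt • J ((2:ℝ)⁻¹ • (z₀ + z₁)) (A ((2:ℝ)⁻¹ • (z₀ + z₁)) + b)) :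
    (1/2 : ℝ) * ⟪A z₁, z₁⟫ + ⟪b, z₁⟫ = (1/2 : ℝ) * ⟪A z₀, z₀⟫ + ⟪b, z₀⟫ := by
  set gradH := A ((2:ℝ)⁻¹ • (z₀ + z₁)) + b
  have hstep : z₁ - z₀ = Δt • J ((2:ℝ)⁻¹ • (z₀ + z₁)) gradH := sub_eq_of_eq_add' hrel
  change quadraticHamiltonian A b z₁ = quadraticHamiltonian A b z₀
  rw [← sub_eq_zero, quadraticHamiltonian_sub_eq_inner_midpoint hA, hstep,
    real_inner_smul_right, real_inner_comm, hJ, mul_zero]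

/-- The implicit midpoint rule exactly conserves quadratic Hamiltonians
`H(z) = ½⟪Az, z⟫ + ⟪b, z⟫` (with `A` symmetric) for systems `ż = J(z)∇H(z)` with skew
structure operator `J`: if `z₁ = z₀ + Δt J(m)(A m + b)` with `m = (z₀ + z₁)/2`, then
`H(z₁) = H(z₀)`. Note `A m + b = ∇H(m)`. -/
theorem implicit_midpoint_conserves_quadratic_hamiltonian
    {E : Type*} [NormedAddCommGroup E] [InnerProductSpace ℝ E] [FiniteDimensional ℝ E]
    (A : E →ₗ[ℝ] E) (hA : ∀ x y : E, ⟪A x, y⟫ = ⟪x, A y⟫) (b : E)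
    (J : E → (E →ₗ[ℝ] E)) (hJ : ∀ z v, ⟪J z v, v⟫ = 0)
    (Δt : ℝ) (z₀ z₁ : E)
    (hrel : z₁ = z₀ + Δt • J ((2:ℝ)⁻¹ • (z₀ + z₁)) (A ((2:ℝ)⁻¹ • (z₀ + z₁)) + b)) :
    (1/2 : ℝ) * ⟪A z₁, z₁⟫ + ⟪b, z₁⟫ = (1/2 : ℝ) * ⟪A z₀, z₀⟫ + ⟪b, z₀⟫ :=
  implicit_midpoint_conserves_quadratic_hamiltonian_general A hA b J hJ Δt z₀ z₁ hrel
end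

section
/- Fix real constants R₀ > 0, Ω, u₀, g ≠ 0, h₀. For p = (x, y, z) ∈ ℝ³, define the solid-body velocity field u(p) := (u₀/R₀) (−y, x, 0), the Coriolis parameter f(p) := 2Ω z / R₀, and the depth D(p) := h₀ − (R₀ Ω u₀ + u₀²/2) z² / (R₀² g). Then for every p with x² + y² + z² = R₀², the vector ( (p/R₀) · (∇ × u)(p) + f(p) ) • ( (p/R₀) × u(p) ) + ∇( ½|u|² + g D )(p) is a scalar multiple of p (i.e. lies in the real span of p). Here ∇ × u is the usual curl in ℝ³, × is the cross product, and ∇ is the gradient in ℝ³. -/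
/-! With `ω = u₀/R₀` the velocity is a rigid rotation about the polar axis, so `∇ × u = (0, 0, 2ω)`
and the absolute vorticity is `2(ω + Ω)z/R₀`, while `∇(½|u|² + gD) = (ω²x, ω²y, −(ω² + 2Ωω)z)`.
The vector is then `λp` with `λ = ω² − 2ω(ω + Ω)z²/R₀²`: the horizontal components match
identically, the vertical one exactly because `x² + y² + z² = R₀²`. -/

theorem deriv_eq_of_forall_eq_quadratic {f : ℝ → ℝ} {a b : ℝ}
    (hf : ∀ t, f t = a * t ^ 2 + b * t + f 0) (s : ℝ) : deriv f s = 2 * a * s + b := by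
  rw [funext hf]
  exact ((((hasDerivAt_pow 2 s).const_mul a).add ((hasDerivAt_id s).const_mul b)).add_const
    _).deriv.trans (by ring)

section SolidBodyRotation

variable {ω : ℝ} {u1 u2 u3 : ℝ → ℝ → ℝ → ℝ}
  (hu1 : ∀ x y z, u1 x y z = ω * -y) (hu2 : ∀ x y z, u2 x y z = ω * x)
  (hu3 : ∀ x y z, u3 x y z = 0)
include hu1 hu2 hu3

theorem curl_solidBodyRotation (x y z : ℝ) :
    deriv (fun b => u3 x b z) y - deriv (fun c => u2 x y c) z = 0 ∧
    deriv (fun c => u1 x y c) z - deriv (fun a => u3 a y z) x = 0 ∧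
    deriv (fun a => u2 a y z) x - deriv (fun b => u1 x b z) y = 2 * ω := by
  refine ⟨by simp [hu2, hu3], by simp [hu1, hu3], ?_⟩
  rw [deriv_eq_of_forall_eq_quadratic (a := 0) (b := ω) (fun t => by simp only [hu2]; ring),
    deriv_eq_of_forall_eq_quadratic (a := 0) (b := -ω) (fun t => by simp only [hu1]; ring)]
  ring

theorem gradient_bernoulli_solidBodyRotation {g h₀ K R₀ : ℝ} (hg : g ≠ 0)
    {D B : ℝ → ℝ → ℝ → ℝ} (hD : ∀ x y z, D x y z = h₀ - K * z ^ 2 / (R₀ ^ 2 * g))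
    (hB : ∀ a b c, B a b c = ((u1 a b c) ^ 2 + (u2 a b c) ^ 2 + (u3 a b c) ^ 2) / 2 + g * D a b c)
    (x y z : ℝ) :
    deriv (fun a => B a y z) x = ω ^ 2 * x ∧
    deriv (fun b => B x b z) y = ω ^ 2 * y ∧
    deriv (fun c => B x y c) z = -(2 * K / R₀ ^ 2) * z := by
  refine ⟨?_, ?_, ?_⟩
  · rw [deriv_eq_of_forall_eq_quadratic (a := ω ^ 2 / 2) (b := 0)
      (fun t => by simp only [hB, hu1, hu2, hu3, hD]; ring)]
    ring
  · rw [deriv_eq_of_forall_eq_quadratic (a := ω ^ 2 / 2) (b := 0)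
      (fun t => by simp only [hB, hu1, hu2, hu3, hD]; ring)]
    ring
  · rw [deriv_eq_of_forall_eq_quadratic (a := -(K / R₀ ^ 2)) (b := 0)
      (fun t => by simp only [hB, hu1, hu2, hu3, hD]; field_simp; ring)]
    ring

end SolidBodyRotation

/-- Williamson test case 2 (solid body rotation) is a steady state of the rotating
shallow water equations on the sphere of radius `R₀`: with velocity
`u(p) = (u₀/R₀)(−y, x, 0)`, Coriolis parameter `f(p) = 2Ωz/R₀` and depth
`D(p) = h₀ − (R₀Ωu₀ + u₀²/2) z²/(R₀²g)`, at every point `p` of the sphere the vector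
`((p/R₀)·(∇×u)(p) + f(p)) ((p/R₀) × u(p)) + ∇(½|u|² + gD)(p)` is normal to the sphere,
i.e. a scalar multiple of `p`. -/
theorem williamson2_steady_state
    (R₀ Om u₀ g h₀ : ℝ) (hR₀ : 0 < R₀) (hg : g ≠ 0)
    (u1 u2 u3 : ℝ → ℝ → ℝ → ℝ) (f D : ℝ → ℝ → ℝ → ℝ)
    (hu1 : ∀ x y z, u1 x y z = (u₀ / R₀) * (-y))
    (hu2 : ∀ x y z, u2 x y z = (u₀ / R₀) * x)
    (hu3 : ∀ x y z, u3 x y z = 0)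
    (hf : ∀ x y z, f x y z = 2 * Om * z / R₀)
    (hD : ∀ x y z, D x y z = h₀ - (R₀ * Om * u₀ + u₀ ^ 2 / 2) * z ^ 2 / (R₀ ^ 2 * g))
    (x y z : ℝ) (hsphere : x ^ 2 + y ^ 2 + z ^ 2 = R₀ ^ 2) :
    -- curl of u
    let c1 := deriv (fun b => u3 x b z) y - deriv (fun c => u2 x y c) z
    let c2 := deriv (fun c => u1 x y c) z - deriv (fun a => u3 a y z) x
    let c3 := deriv (fun a => u2 a y z) x - deriv (fun b => u1 x b z) y
    -- absolute vorticity (p/R₀)·(∇×u) + f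
    let ζ := (x * c1 + y * c2 + z * c3) / R₀ + f x y z
    -- w = (p/R₀) × u
    let w1 := (y * u3 x y z - z * u2 x y z) / R₀
    let w2 := (z * u1 x y z - x * u3 x y z) / R₀
    let w3 := (x * u2 x y z - y * u1 x y z) / R₀
    -- Bernoulli function B = ½|u|² + gD
    let B : ℝ → ℝ → ℝ → ℝ := fun a b c =>
      ((u1 a b c) ^ 2 + (u2 a b c) ^ 2 + (u3 a b c) ^ 2) / 2 + g * D a b c
    ∃ lam : ℝ,
      ζ * w1 + deriv (fun a => B a y z) x = lam * x ∧
      ζ * w2 + deriv (fun b => B x b z) y = lam * y ∧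
      ζ * w3 + deriv (fun c => B x y c) z = lam * z := by
  intro c1 c2 c3 ζ w1 w2 w3 B
  have hR : R₀ ≠ 0 := hR₀.ne'
  obtain ⟨hc1, hc2, hc3⟩ := curl_solidBodyRotation hu1 hu2 hu3 x y z
  obtain ⟨hBx, hBy, hBz⟩ :=
    gradient_bernoulli_solidBodyRotation hu1 hu2 hu3 hg hD (B := B) (fun _ _ _ => rfl) x y z
  have hζ : ζ = 2 * (u₀ / R₀ + Om) * z / R₀ := by
    simp only [ζ, c1, c2, c3, hc1, hc2, hc3, hf]; ring
  refine ⟨u₀ ^ 2 / R₀ ^ 2 - 2 * u₀ * (u₀ / R₀ + Om) * z ^ 2 / R₀ ^ 3, ?_, ?_, ?_⟩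
  · rw [hζ, hBx]; simp only [w1, hu2, hu3]; field_simp; ring
  · rw [hζ, hBy]; simp only [w2, hu1, hu3]; field_simp; ring
  · rw [hζ, hBz]; simp only [w3, hu1, hu2]
    field_simp
    linear_combination (2 * u₀ * (u₀ + R₀ * Om) * z) * hsphere
end

section
/- Let Q = [0,1]² ⊆ ℝ² and fix τ ∈ ℝ and a time t. Let q, D : ℝ × Q → ℝ, F : ℝ × Q → ℝ², and γ : Q → ℝ be continuously differentiable (with qD continuously differentiable in t), with D(t, ·) > 0 on Q, and suppose F(t, ·) satisfies the slip boundary condition: F₁(t,0,y) = F₁(t,1,y) = 0 for all y ∈ [0,1] and F₂(t,x,0) = F₂(t,x,1) = 0 for all x ∈ [0,1]. Then, writing R := ∂ₜ(qD) + ∇·(qF) for the potential vorticity residual at time t, the following integration-by-parts identity holds: ∫_Q γ ∂ₜ(qD) dx − ∫_Q ∇γ · ( (q − (τ/D) R) F ) dx = ∫_Q ( γ + (τ/D) F·∇γ ) R dx. -/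
open MeasureTheory

/-- The potential vorticity residual `R = ∂ₜ(qD) + ∇·(qF)` at time `t` and point `(x,y)`. -/
noncomputable def pvResidual (q D F1 F2 : ℝ → ℝ → ℝ → ℝ) (t x y : ℝ) : ℝ :=
  deriv (fun s => q s x y * D s x y) t
    + deriv (fun a => q t a y * F1 t a y) x
    + deriv (fun b => q t x b * F2 t x b) y

/-!
Expanding `q* = q - (τ/D) R`, the stabilisation term `-(τ/D) R F·∇γ` on the left cancels the term
`(τ/D) (F·∇γ) R` on the right, and what is left is `∫_Q (∇γ·(qF) + γ ∇·(qF)) = ∫_Q ∇·(γ q F) = 0`: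
the divergence theorem on the square, whose boundary terms vanish by the slip condition.

The derivatives in the statement are two-sided `deriv`s, which take junk values on `∂Q` where the
data are only differentiable within `Q`. In the open square they agree with partial derivatives
continuous on all of `Q`, and `∂Q` is Lebesgue-null; this gives both the integrability of every
integrand and the comparison with the divergence theorem.
-/

open Set

def ContinuousOnModFrontier {α β : Type*} [TopologicalSpace α] [TopologicalSpace β]
    (f : α → β) (s : Set α) : Prop :=
  ∃ g : α → β, ContinuousOn g s ∧ EqOn f g (interior s)

namespace ContinuousOnModFrontier

variable {α β : Type*} [TopologicalSpace α] [TopologicalSpace β] {f g : α → β} {s : Set α}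

theorem _root_.ContinuousOn.continuousOnModFrontier (hf : ContinuousOn f s) :
    ContinuousOnModFrontier f s :=
  ⟨f, hf, eqOn_refl f _⟩

theorem add [Add β] [ContinuousAdd β] (hf : ContinuousOnModFrontier f s)
    (hg : ContinuousOnModFrontier g s) : ContinuousOnModFrontier (fun x => f x + g x) s := by
  obtain ⟨f₀, hf₀, hff₀⟩ := hf
  obtain ⟨g₀, hg₀, hgg₀⟩ := hg
  exact ⟨fun x => f₀ x + g₀ x, hf₀.add hg₀, fun _ hx => congrArg₂ (· + ·) (hff₀ hx) (hgg₀ hx)⟩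

theorem sub [Sub β] [ContinuousSub β] (hf : ContinuousOnModFrontier f s)
    (hg : ContinuousOnModFrontier g s) : ContinuousOnModFrontier (fun x => f x - g x) s := by
  obtain ⟨f₀, hf₀, hff₀⟩ := hf
  obtain ⟨g₀, hg₀, hgg₀⟩ := hg
  exact ⟨fun x => f₀ x - g₀ x, hf₀.sub hg₀, fun _ hx => congrArg₂ (· - ·) (hff₀ hx) (hgg₀ hx)⟩

theorem mul [Mul β] [ContinuousMul β] (hf : ContinuousOnModFrontier f s)
    (hg : ContinuousOnModFrontier g s) : ContinuousOnModFrontier (fun x => f x * g x) s := by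
  obtain ⟨f₀, hf₀, hff₀⟩ := hf
  obtain ⟨g₀, hg₀, hgg₀⟩ := hg
  exact ⟨fun x => f₀ x * g₀ x, hf₀.mul hg₀, fun _ hx => congrArg₂ (· * ·) (hff₀ hx) (hgg₀ hx)⟩

end ContinuousOnModFrontier

section ConvexDomain

variable {E F : Type*} [NormedAddCommGroup E] [NormedSpace ℝ E] [MeasurableSpace E]
  [BorelSpace E] [FiniteDimensional ℝ E] [NormedAddCommGroup F] (μ : Measure E)
  [μ.IsAddHaarMeasure] {s : Set E}

theorem Convex.ae_restrict_eq_of_eqOn_interior {β : Type*} {f g : E → β} (hs : Convex ℝ s)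
    (h : EqOn f g (interior s)) : f =ᵐ[μ.restrict s] g := by
  rw [Measure.restrict_congr_set (interior_ae_eq_of_null_frontier (hs.addHaar_frontier μ)).symm]
  exact ae_restrict_of_forall_mem isOpen_interior.measurableSet h

theorem ContinuousOnModFrontier.integrableOn {f : E → F} (hf : ContinuousOnModFrontier f s)
    (hs : Convex ℝ s) (hs' : IsCompact s) : IntegrableOn f s μ := by
  obtain ⟨g, hg, hfg⟩ := hf
  exact (hg.integrableOn_compact hs').congr_fun_ae (hs.ae_restrict_eq_of_eqOn_interior μ hfg).symm

end ConvexDomain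

section PartialDerivatives

variable {E F : Type*} [NormedAddCommGroup E] [NormedSpace ℝ E]
  [NormedAddCommGroup F] [NormedSpace ℝ F]

theorem DifferentiableOn.hasFDerivAt_of_mem_interior {f : E → F} {s : Set E} {x : E}
    (hf : DifferentiableOn ℝ f s) (hx : x ∈ interior s) :
    HasFDerivAt f (fderivWithin ℝ f s x) x :=
  (hf x (interior_subset hx)).hasFDerivWithinAt.hasFDerivAt (mem_interior_iff_mem_nhds.mp hx)

theorem HasFDerivAt.deriv_partial_fst {g : ℝ × E → F} {g' : ℝ × E →L[ℝ] F} {p : ℝ × E}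
    (h : HasFDerivAt g g' p) : deriv (fun x => g (x, p.2)) p.1 = g' (1, 0) :=
  (h.comp_hasDerivAt p.1 ((hasDerivAt_id' p.1).prodMk (hasDerivAt_const p.1 p.2))).deriv

theorem HasFDerivAt.deriv_partial_snd {g : E × ℝ → F} {g' : E × ℝ →L[ℝ] F} {p : E × ℝ}
    (h : HasFDerivAt g g' p) : deriv (fun y => g (p.1, y)) p.2 = g' (0, 1) :=
  (h.comp_hasDerivAt p.2 ((hasDerivAt_const p.2 p.1).prodMk (hasDerivAt_id' p.2))).deriv

theorem ContDiffOn.comp_prodMk_const_left {g : ℝ × E → F} {s : Set E} {n : WithTop ℕ∞}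
    (hg : ContDiffOn ℝ n g (univ ×ˢ s)) (t : ℝ) : ContDiffOn ℝ n (fun p => g (t, p)) s :=
  hg.comp (contDiff_const.prodMk contDiff_id).contDiffOn fun _ hp => ⟨mem_univ t, hp⟩

theorem ContDiffOn.continuousOnModFrontier_deriv_fst {g : ℝ × E → F} {s : Set (ℝ × E)}
    (hg : ContDiffOn ℝ 1 g s) (hs : UniqueDiffOn ℝ s) :
    ContinuousOnModFrontier (fun p => deriv (fun x => g (x, p.2)) p.1) s :=
  ⟨fun p => fderivWithin ℝ g s p (1, 0),
    (hg.continuousOn_fderivWithin hs le_rfl).clm_apply continuousOn_const,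
    fun _ hp =>
      ((hg.differentiableOn one_ne_zero).hasFDerivAt_of_mem_interior hp).deriv_partial_fst⟩

theorem ContDiffOn.continuousOnModFrontier_deriv_snd {g : E × ℝ → F} {s : Set (E × ℝ)}
    (hg : ContDiffOn ℝ 1 g s) (hs : UniqueDiffOn ℝ s) :
    ContinuousOnModFrontier (fun p => deriv (fun y => g (p.1, y)) p.2) s :=
  ⟨fun p => fderivWithin ℝ g s p (0, 1),
    (hg.continuousOn_fderivWithin hs le_rfl).clm_apply continuousOn_const,
    fun _ hp =>
      ((hg.differentiableOn one_ne_zero).hasFDerivAt_of_mem_interior hp).deriv_partial_snd⟩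

theorem ContDiffOn.continuousOnModFrontier_deriv_fst_of_univ_prod {g : ℝ × E → F} {s : Set E}
    (hg : ContDiffOn ℝ 1 g (univ ×ˢ s)) (hs : UniqueDiffOn ℝ s) (t : ℝ) :
    ContinuousOnModFrontier (fun p => deriv (fun τ => g (τ, p)) t) s := by
  refine ⟨fun p => fderivWithin ℝ g (univ ×ˢ s) (t, p) (1, 0), ?_, fun p hp => ?_⟩
  · exact ((hg.continuousOn_fderivWithin (uniqueDiffOn_univ.prod hs) le_rfl).comp
      (continuous_const.prodMk continuous_id).continuousOn fun _ hp => ⟨mem_univ t, hp⟩).clm_apply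
      continuousOn_const
  · have hmem : (t, p) ∈ interior (univ ×ˢ s) := by
      rw [interior_prod_eq, interior_univ]
      exact ⟨mem_univ t, hp⟩
    exact ((hg.differentiableOn one_ne_zero).hasFDerivAt_of_mem_interior hmem).deriv_partial_fst

end PartialDerivatives

theorem integral_divergence_Icc_prod_Icc_eq_zero {E : Type*} [NormedAddCommGroup E]
    [NormedSpace ℝ E] {a₁ b₁ a₂ b₂ : ℝ} (h₁ : a₁ ≤ b₁) (h₂ : a₂ ≤ b₂) {f g : ℝ × ℝ → E}
    {f' g' : ℝ × ℝ → ℝ × ℝ →L[ℝ] E} (hf : ContinuousOn f (Icc a₁ b₁ ×ˢ Icc a₂ b₂))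
    (hg : ContinuousOn g (Icc a₁ b₁ ×ˢ Icc a₂ b₂))
    (hf' : ∀ x ∈ Ioo a₁ b₁ ×ˢ Ioo a₂ b₂, HasFDerivAt f (f' x) x)
    (hg' : ∀ x ∈ Ioo a₁ b₁ ×ˢ Ioo a₂ b₂, HasFDerivAt g (g' x) x)
    (hi : IntegrableOn (fun x => f' x (1, 0) + g' x (0, 1)) (Icc a₁ b₁ ×ˢ Icc a₂ b₂))
    (hf₀ : ∀ y ∈ Icc a₂ b₂, f (a₁, y) = 0 ∧ f (b₁, y) = 0)
    (hg₀ : ∀ x ∈ Icc a₁ b₁, g (x, a₂) = 0 ∧ g (x, b₂) = 0) :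
    ∫ x in Icc a₁ b₁ ×ˢ Icc a₂ b₂, (f' x (1, 0) + g' x (0, 1)) = 0 := by
  have hvanish {l u : ℝ} {φ : ℝ → E} (hlu : l ≤ u) (hφ : ∀ x ∈ Icc l u, φ x = 0) :
      ∫ x in l..u, φ x = 0 :=
    intervalIntegral.integral_zero_ae
      (.of_forall fun x hx => hφ x (Ioc_subset_Icc_self (uIoc_of_le hlu ▸ hx)))
  rw [Icc_prod_Icc] at hf hg hi ⊢
  rw [integral_divergence_prod_Icc_of_hasFDerivAt_of_le f g f' g' _ _ ⟨h₁, h₂⟩ hf hg hf' hg' hi,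
    hvanish h₁ fun x hx => (hg₀ x hx).2, hvanish h₁ fun x hx => (hg₀ x hx).1,
    hvanish h₂ fun y hy => (hf₀ y hy).2, hvanish h₂ fun y hy => (hf₀ y hy).1]
  simp

theorem integral_mul_divergence_add_gradient_eq_zero {a₁ b₁ a₂ b₂ : ℝ} (h₁ : a₁ < b₁)
    (h₂ : a₂ < b₂) {γ G₁ G₂ : ℝ × ℝ → ℝ} (hγ : ContDiffOn ℝ 1 γ (Icc a₁ b₁ ×ˢ Icc a₂ b₂))
    (hG₁ : ContDiffOn ℝ 1 G₁ (Icc a₁ b₁ ×ˢ Icc a₂ b₂))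
    (hG₂ : ContDiffOn ℝ 1 G₂ (Icc a₁ b₁ ×ˢ Icc a₂ b₂))
    (hG₁₀ : ∀ y ∈ Icc a₂ b₂, G₁ (a₁, y) = 0 ∧ G₁ (b₁, y) = 0)
    (hG₂₀ : ∀ x ∈ Icc a₁ b₁, G₂ (x, a₂) = 0 ∧ G₂ (x, b₂) = 0) :
    ∫ p in Icc a₁ b₁ ×ˢ Icc a₂ b₂,
      (γ p * (deriv (fun x => G₁ (x, p.2)) p.1 + deriv (fun y => G₂ (p.1, y)) p.2)
        + (deriv (fun x => γ (x, p.2)) p.1 * G₁ p + deriv (fun y => γ (p.1, y)) p.2 * G₂ p))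
      = 0 := by
  set S := Icc a₁ b₁ ×ˢ Icc a₂ b₂
  have hinterior : interior S = Ioo a₁ b₁ ×ˢ Ioo a₂ b₂ := by
    rw [interior_prod_eq, interior_Icc, interior_Icc]
  have hfd {g : ℝ × ℝ → ℝ} (hg : ContDiffOn ℝ 1 g S) {p : ℝ × ℝ} (hp : p ∈ interior S) :
      HasFDerivAt g (fderivWithin ℝ g S p) p :=
    (hg.differentiableOn one_ne_zero).hasFDerivAt_of_mem_interior hp
  have hfc {g : ℝ × ℝ → ℝ} (hg : ContDiffOn ℝ 1 g S) : ContinuousOn (fderivWithin ℝ g S) S :=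
    hg.continuousOn_fderivWithin ((uniqueDiffOn_Icc h₁).prod (uniqueDiffOn_Icc h₂)) le_rfl
  have hdiv := integral_divergence_Icc_prod_Icc_eq_zero h₁.le h₂.le
    (f := fun p => γ p * G₁ p) (g := fun p => γ p * G₂ p)
    (f' := fun p => γ p • fderivWithin ℝ G₁ S p + G₁ p • fderivWithin ℝ γ S p)
    (g' := fun p => γ p • fderivWithin ℝ G₂ S p + G₂ p • fderivWithin ℝ γ S p)
    (hγ.continuousOn.mul hG₁.continuousOn) (hγ.continuousOn.mul hG₂.continuousOn)
    (fun p hp => (hfd hγ (hinterior ▸ hp)).mul (hfd hG₁ (hinterior ▸ hp)))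
    (fun p hp => (hfd hγ (hinterior ▸ hp)).mul (hfd hG₂ (hinterior ▸ hp)))
    (ContinuousOn.integrableOn_compact (isCompact_Icc.prod isCompact_Icc)
      ((((hγ.continuousOn.smul (hfc hG₁)).add (hG₁.continuousOn.smul (hfc hγ))).clm_apply
        continuousOn_const).add
      (((hγ.continuousOn.smul (hfc hG₂)).add (hG₂.continuousOn.smul (hfc hγ))).clm_apply
        continuousOn_const)))
    (fun y hy => by simp [hG₁₀ y hy]) (fun x hx => by simp [hG₂₀ x hx])
  rw [← hdiv]
  refine integral_congr_ae
    (((convex_Icc a₁ b₁).prod (convex_Icc a₂ b₂)).ae_restrict_eq_of_eqOn_interior volume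
      fun p hp => ?_)
  rw [(hfd hG₁ hp).deriv_partial_fst, (hfd hG₂ hp).deriv_partial_snd,
    (hfd hγ hp).deriv_partial_fst, (hfd hγ hp).deriv_partial_snd]
  simp only [add_apply, smul_apply, smul_eq_mul]
  ring

/-- The SUPG identity on the unit square `Q = [0,1]²`: with the SUPG-modified potential
vorticity `q* = q − (τ/D) R`, where `R = ∂ₜ(qD) + ∇·(qF)` is the potential vorticity
residual, and with the mass flux `F` satisfying the slip boundary condition at time `t`,
`∫_Q γ ∂ₜ(qD) − ∫_Q ∇γ · (q* F) = ∫_Q (γ + (τ/D) F·∇γ) R`, i.e. the weak potential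
vorticity equation with `q` replaced by `q*` is the SUPG discretisation of the potential
vorticity conservation law tested against `γ + (τ/D) F·∇γ`. -/
theorem supg_identity
    (τ t : ℝ) (q D F1 F2 : ℝ → ℝ → ℝ → ℝ) (γ : ℝ → ℝ → ℝ)
    (hq : ContDiffOn ℝ 1 (fun p : ℝ × ℝ × ℝ => q p.1 p.2.1 p.2.2)
      (Set.univ ×ˢ (Set.Icc (0:ℝ) 1 ×ˢ Set.Icc (0:ℝ) 1)))
    (hD : ContDiffOn ℝ 1 (fun p : ℝ × ℝ × ℝ => D p.1 p.2.1 p.2.2)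
      (Set.univ ×ˢ (Set.Icc (0:ℝ) 1 ×ˢ Set.Icc (0:ℝ) 1)))
    (hF1 : ContDiffOn ℝ 1 (fun p : ℝ × ℝ × ℝ => F1 p.1 p.2.1 p.2.2)
      (Set.univ ×ˢ (Set.Icc (0:ℝ) 1 ×ˢ Set.Icc (0:ℝ) 1)))
    (hF2 : ContDiffOn ℝ 1 (fun p : ℝ × ℝ × ℝ => F2 p.1 p.2.1 p.2.2)
      (Set.univ ×ˢ (Set.Icc (0:ℝ) 1 ×ˢ Set.Icc (0:ℝ) 1)))
    (hγ : ContDiffOn ℝ 1 (fun p : ℝ × ℝ => γ p.1 p.2) (Set.Icc (0:ℝ) 1 ×ˢ Set.Icc (0:ℝ) 1))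
    (hDpos : ∀ x y, (x, y) ∈ Set.Icc (0:ℝ) 1 ×ˢ Set.Icc (0:ℝ) 1 → 0 < D t x y)
    (hbc1 : ∀ y, y ∈ Set.Icc (0:ℝ) 1 → F1 t 0 y = 0 ∧ F1 t 1 y = 0)
    (hbc2 : ∀ x, x ∈ Set.Icc (0:ℝ) 1 → F2 t x 0 = 0 ∧ F2 t x 1 = 0) :
    (∫ p in Set.Icc (0:ℝ) 1 ×ˢ Set.Icc (0:ℝ) 1,
        γ p.1 p.2 * deriv (fun s => q s p.1 p.2 * D s p.1 p.2) t)
    - (∫ p in Set.Icc (0:ℝ) 1 ×ˢ Set.Icc (0:ℝ) 1,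
        (deriv (fun a => γ a p.2) p.1
            * ((q t p.1 p.2 - τ / D t p.1 p.2 * pvResidual q D F1 F2 t p.1 p.2)
                * F1 t p.1 p.2)
          + deriv (fun b => γ p.1 b) p.2
            * ((q t p.1 p.2 - τ / D t p.1 p.2 * pvResidual q D F1 F2 t p.1 p.2)
                * F2 t p.1 p.2)))
    = ∫ p in Set.Icc (0:ℝ) 1 ×ˢ Set.Icc (0:ℝ) 1,
        (γ p.1 p.2 + τ / D t p.1 p.2
            * (F1 t p.1 p.2 * deriv (fun a => γ a p.2) p.1
              + F2 t p.1 p.2 * deriv (fun b => γ p.1 b) p.2))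
          * pvResidual q D F1 F2 t p.1 p.2 := by
  set Q := Icc (0:ℝ) 1 ×ˢ Icc (0:ℝ) 1
  have hQ : UniqueDiffOn ℝ Q := uniqueDiffOn_Icc_zero_one.prod uniqueDiffOn_Icc_zero_one
  have hint {f : ℝ × ℝ → ℝ} (hf : ContinuousOnModFrontier f Q) : IntegrableOn f Q :=
    hf.integrableOn volume ((convex_Icc 0 1).prod (convex_Icc 0 1))
      (isCompact_Icc.prod isCompact_Icc)
  have hqF1 := (hq.mul hF1).comp_prodMk_const_left t
  have hqF2 := (hq.mul hF2).comp_prodMk_const_left t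
  have hT := (hq.mul hD).continuousOnModFrontier_deriv_fst_of_univ_prod hQ t
  have hR : ContinuousOnModFrontier (fun p => pvResidual q D F1 F2 t p.1 p.2) Q :=
    (hT.add (hqF1.continuousOnModFrontier_deriv_fst hQ)).add
      (hqF2.continuousOnModFrontier_deriv_snd hQ)
  have hγx := hγ.continuousOnModFrontier_deriv_fst hQ
  have hγy := hγ.continuousOnModFrontier_deriv_snd hQ
  have hγc := hγ.continuousOn.continuousOnModFrontier
  have hqc := (hq.comp_prodMk_const_left t).continuousOn.continuousOnModFrontier
  have hF1c := (hF1.comp_prodMk_const_left t).continuousOn.continuousOnModFrontier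
  have hF2c := (hF2.comp_prodMk_const_left t).continuousOn.continuousOnModFrontier
  have hτD : ContinuousOnModFrontier (fun p => τ / D t p.1 p.2) Q :=
    (continuousOn_const.div (hD.comp_prodMk_const_left t).continuousOn
      fun p hp => (hDpos p.1 p.2 hp).ne').continuousOnModFrontier
  have h₁ := hγc.mul hT
  have h₂ := (hγx.mul ((hqc.sub (hτD.mul hR)).mul hF1c)).add
    (hγy.mul ((hqc.sub (hτD.mul hR)).mul hF2c))
  have h₃ := (hγc.add (hτD.mul ((hF1c.mul hγx).add (hF2c.mul hγy)))).mul hR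
  rw [← sub_eq_zero, ← integral_sub (hint h₁) (hint h₂),
    ← integral_sub (hint (h₁.sub h₂)) (hint h₃), ← neg_eq_zero, ← integral_neg]
  convert integral_mul_divergence_add_gradient_eq_zero zero_lt_one zero_lt_one hγ hqF1 hqF2
    (fun y hy => by simp [hbc1 y hy]) (fun x hx => by simp [hbc2 x hx]) using 3 with p
  simp only [pvResidual]
  ring
end
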